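/- Let C : ℝ^n → ℝ^q and A : ℝ^n → ℝ^n be linear maps, let B = ker C, and let P_0, …, P_r : ℝ^m → ℝ^n be linear maps satisfying: C ∘ (A ∘ P_0) = 0; C ∘ (P_{i−1} − A ∘ P_i) = 0 for every 1 ≤ i ≤ r; and C ∘ P_r = 0. Then for every 0 ≤ i ≤ r, the range of P_i is contained in the submodule B + A(B) + A²(B) + ⋯ + A^{r−i}(B) of ℝ^n, where A^j(B) denotes the image of B under the j-th iterate of A. -/

import Mathlib

/-! Downward induction on `i`: writing `P_{i-1} = (P_{i-1} - A P_i) + A P_i`, the first summand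
lies in `ker C`, and `A` shifts `∑_{j ≤ d} Aʲ(ker C)` into the tail of `∑_{j ≤ d+1} Aʲ(ker C)`. -/

open Submodule LinearMap Finset

theorem Submodule.map_finsetSum {R M N ι : Type*} [Semiring R] [AddCommMonoid M]
    [AddCommMonoid N] [Module R M] [Module R N] (f : M →ₗ[R] N) (s : Finset ι)
    (p : ι → Submodule R M) : (∑ i ∈ s, p i).map f = ∑ i ∈ s, (p i).map f := by
  classical
  induction s using Finset.induction with
  | empty => simp
  | insert a s ha ih => simp only [sum_insert ha, add_eq_sup, map_sup, ih]

section

variable {R M N M' : Type*} [Ring R] [AddCommGroup M] [AddCommGroup N] [AddCommGroup M']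
  [Module R M] [Module R N] [Module R M']

theorem Submodule.sum_range_succ_map_pow (A : Module.End R M) (p : Submodule R M) (d : ℕ) :
    ∑ j ∈ range (d + 1), p.map (A ^ j) = p ⊔ (∑ j ∈ range d, p.map (A ^ j)).map A := by
  simp only [sum_range_succ', pow_zero, Module.End.one_eq_id, map_id, map_finsetSum, pow_succ',
    Module.End.mul_eq_comp, map_comp, add_eq_sup, sup_comm]

theorem LinearMap.range_le_ker_sup_map_of_comp_sub_eq_zero {C : M →ₗ[R] N}
    {A : Module.End R M} {P Q : M' →ₗ[R] M} {K : Submodule R M}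
    (hPQ : C ∘ₗ (P - A ∘ₗ Q) = 0) (hQ : range Q ≤ K) : range P ≤ ker C ⊔ K.map A := by
  rintro _ ⟨y, rfl⟩
  have hsplit : P y = (P - A ∘ₗ Q) y + A (Q y) := by simp
  rw [hsplit]
  exact add_mem_sup (range_le_ker_iff.mpr hPQ ⟨y, rfl⟩) (mem_map_of_mem (hQ ⟨y, rfl⟩))

end

/-- If `B = ker C` and the linear maps `P_0,…,P_r` satisfy `C ∘ A ∘ P_0 = 0`,
`C ∘ (P_{i-1} - A ∘ P_i) = 0` for `1 ≤ i ≤ r`, and `C ∘ P_r = 0`, then for each `i`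
the range of `P_i` is contained in `B + A(B) + ⋯ + A^{r-i}(B)`. -/
theorem stmt_12 (n m q r : ℕ)
    (C : (Fin n → ℝ) →ₗ[ℝ] (Fin q → ℝ)) (A : (Fin n → ℝ) →ₗ[ℝ] (Fin n → ℝ))
    (P : Fin (r+1) → ((Fin m → ℝ) →ₗ[ℝ] (Fin n → ℝ)))
    (hstep : ∀ (i : ℕ) (h1 : 1 ≤ i) (h2 : i ≤ r),
      C ∘ₗ (P ⟨i - 1, by omega⟩ - A ∘ₗ P ⟨i, by omega⟩) = 0)
    (hlast : C ∘ₗ P (Fin.last r) = 0) :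
    ∀ i : Fin (r+1), LinearMap.range (P i) ≤
      ∑ j ∈ Finset.range (r - i.val + 1), Submodule.map (A ^ j) (LinearMap.ker C) := by
  intro i
  induction i using Fin.reverseInduction with
  | last => simpa [Module.End.one_eq_id, range_le_ker_iff] using hlast
  | cast i ih =>
    rw [show r - i.castSucc.val = r - i.succ.val + 1 by simp; omega, sum_range_succ_map_pow]
    exact range_le_ker_sup_map_of_comp_sub_eq_zero (hstep (i + 1) (by omega) i.isLt) ih
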